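/- Let n ≥ 1 be an integer and let 0 < a < b. Then there exists a constant C > 0, depending only on n, a and b, such that for every h ∈ (0, 1], ∑ d_{ℓ,ℓ} ≤ C · h^{−2n}, where the sum ranges over all integers ℓ ≥ 1 with a < h² λ_{ℓ,ℓ} < b (here λ_{ℓ,ℓ} = 2ℓ² + 2nℓ). -/
import Mathlib


/-- The dimension `d_{ℓ,ℓ'}` of the space `𝓗^{ℓ,ℓ'}` of complex spherical harmonics of
bidegree `(ℓ,ℓ')` on `S^{2n+1}`. -/
noncomputable def harmDim (n ℓ ℓ' : ℕ) : ℝ :=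
  if ℓ = 0 then (Nat.choose (ℓ' + n) ℓ' : ℝ)
  else if ℓ' = 0 then (Nat.choose (ℓ + n) ℓ : ℝ)
  else (n : ℝ) * (((ℓ : ℝ) + ℓ' + n) / ((ℓ : ℝ) * ℓ')) *
    (Nat.choose (ℓ + n - 1) (ℓ - 1) : ℝ) * (Nat.choose (ℓ' + n - 1) (ℓ' - 1) : ℝ)

lemma choose_cast_le (n ℓ : ℕ) (hn : 1 ≤ n) (hℓ : 1 ≤ ℓ) :
    (Nat.choose (ℓ + n - 1) (ℓ - 1) : ℝ) ≤ ((ℓ : ℝ) + n) ^ n := by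
  have h1 : Nat.choose (ℓ + n - 1) (ℓ - 1) = Nat.choose (ℓ + n - 1) n := by
    apply Nat.choose_symm_of_eq_add
    omega
  have h2 : Nat.choose (ℓ + n - 1) n ≤ (ℓ + n) ^ n := by
    calc Nat.choose (ℓ + n - 1) n ≤ (ℓ + n - 1) ^ n := Nat.choose_le_pow _ _
    _ ≤ (ℓ + n) ^ n := Nat.pow_le_pow_left (by omega) _
  have := h1 ▸ h2
  calc (Nat.choose (ℓ + n - 1) (ℓ - 1) : ℝ) ≤ ((ℓ + n) ^ n : ℕ) := by exact_mod_cast this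
  _ = ((ℓ : ℝ) + n) ^ n := by push_cast; ring

lemma harmDim_le (n ℓ : ℕ) (hn : 1 ≤ n) (hℓ : 1 ≤ ℓ) :
    harmDim n ℓ ℓ ≤ 3 * (n : ℝ) ^ 2 * (2 * n) ^ (2 * n) * (ℓ : ℝ) ^ (2 * n - 1) := by
  have hℓ0 : ℓ ≠ 0 := by omega
  have hL : (1 : ℝ) ≤ (ℓ : ℝ) := by exact_mod_cast hℓ
  have hLpos : (0 : ℝ) < (ℓ : ℝ) := by linarith
  have hN : (1 : ℝ) ≤ (n : ℝ) := by exact_mod_cast hn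
  have hA := choose_cast_le n ℓ hn hℓ
  have hA0 : (0 : ℝ) ≤ (Nat.choose (ℓ + n - 1) (ℓ - 1) : ℝ) := Nat.cast_nonneg _
  have hsum : (0:ℝ) ≤ (ℓ : ℝ) + n := by linarith
  rw [harmDim, if_neg hℓ0, if_neg hℓ0]
  have step1 : (n : ℝ) * (((ℓ : ℝ) + ℓ + n) / ((ℓ : ℝ) * ℓ)) *
      (Nat.choose (ℓ + n - 1) (ℓ - 1) : ℝ) * (Nat.choose (ℓ + n - 1) (ℓ - 1) : ℝ)
      ≤ (n : ℝ) * ((3 * n) / (ℓ : ℝ)) * (((ℓ : ℝ) + n) ^ n) * (((ℓ : ℝ) + n) ^ n) := by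
    have hfrac : ((ℓ : ℝ) + ℓ + n) / ((ℓ : ℝ) * ℓ) ≤ (3 * n) / (ℓ : ℝ) := by
      rw [div_le_div_iff₀ (by positivity) hLpos]
      have e1 : (0:ℝ) ≤ ((n:ℝ) - 1) * ((ℓ:ℝ) * ℓ) := by
        apply mul_nonneg (by linarith) (by positivity)
      have e2 : (0:ℝ) ≤ (n:ℝ) * ((ℓ:ℝ) * ((ℓ:ℝ) - 1)) := by
        apply mul_nonneg (by linarith)
        apply mul_nonneg (by linarith) (by linarith)
      nlinarith
    gcongr <;> first
      | positivity
      | exact hfrac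
      | exact hA
  refine step1.trans ?_
  have step2 : (n : ℝ) * ((3 * n) / (ℓ : ℝ)) * (((ℓ : ℝ) + n) ^ n) * (((ℓ : ℝ) + n) ^ n)
      ≤ (n : ℝ) * ((3 * n) / (ℓ : ℝ)) * ((2 * n * ℓ : ℝ) ^ n) * ((2 * n * ℓ : ℝ) ^ n) := by
    have hbd : (ℓ : ℝ) + n ≤ 2 * n * ℓ := by nlinarith
    gcongr <;> first | positivity | exact hbd
  refine step2.trans ?_
  have hpow : ((ℓ : ℝ)) ^ (2 * n) = (ℓ : ℝ) ^ (2 * n - 1) * ℓ := by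
    rw [← pow_succ]
    congr 1
    omega
  have : (n : ℝ) * ((3 * n) / (ℓ : ℝ)) * ((2 * n * ℓ : ℝ) ^ n) * ((2 * n * ℓ : ℝ) ^ n)
      = 3 * (n : ℝ) ^ 2 * (2 * n) ^ (2 * n) * ((ℓ : ℝ) ^ (2 * n) / ℓ) := by
    field_simp
    ring
  rw [this, hpow, mul_div_assoc, div_self (ne_of_gt hLpos), mul_one]

/-- Diagonal part of the localized spectral sum: for `n ≥ 1` and `0 < a < b`,
`∑_{ℓ ≥ 1, a < h²λ_{ℓ,ℓ} < b} d_{ℓ,ℓ} ≤ C·h^{−2n}`, where `λ_{ℓ,ℓ} = 2ℓ² + 2nℓ`. -/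
theorem dim_diagonal_upper (n : ℕ) (hn : 1 ≤ n) (a b : ℝ) (ha : 0 < a) (hab : a < b) :
    ∃ C : ℝ, 0 < C ∧ ∀ h : ℝ, h ∈ Set.Ioc (0 : ℝ) 1 →
      (∑ ℓ ∈ (Finset.range (⌊b / h ^ 2⌋₊ + 1)).filter
          (fun ℓ => 1 ≤ ℓ ∧ a < h ^ 2 * ((2 * ℓ * ℓ + 2 * n * ℓ : ℕ) : ℝ) ∧
            h ^ 2 * ((2 * ℓ * ℓ + 2 * n * ℓ : ℕ) : ℝ) < b),
        harmDim n ℓ ℓ)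
      ≤ C / h ^ (2 * n) := by
  have hb : 0 < b := lt_trans ha hab
  have hsb : 0 < Real.sqrt b := Real.sqrt_pos.mpr hb
  have hN : (1 : ℝ) ≤ (n : ℝ) := by exact_mod_cast hn
  refine ⟨3 * (n : ℝ) ^ 2 * (2 * n) ^ (2 * n) * (Real.sqrt b) ^ (2 * n), by positivity, ?_⟩
  intro h ⟨hh0, hh1⟩
  set S := (Finset.range (⌊b / h ^ 2⌋₊ + 1)).filter
      (fun ℓ => 1 ≤ ℓ ∧ a < h ^ 2 * ((2 * ℓ * ℓ + 2 * n * ℓ : ℕ) : ℝ) ∧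
        h ^ 2 * ((2 * ℓ * ℓ + 2 * n * ℓ : ℕ) : ℝ) < b) with hS
  -- every ℓ in S satisfies ℓ ≤ √b / h
  have key : ∀ ℓ ∈ S, (ℓ : ℝ) ≤ Real.sqrt b / h := by
    intro ℓ hℓ
    simp only [hS, Finset.mem_filter] at hℓ
    obtain ⟨-, hℓ1, -, hℓb⟩ := hℓ
    have hL : (1 : ℝ) ≤ (ℓ : ℝ) := by exact_mod_cast hℓ1
    have hcast : ((2 * ℓ * ℓ + 2 * n * ℓ : ℕ) : ℝ) = 2 * ℓ * ℓ + 2 * n * ℓ := by push_cast; ring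
    rw [hcast] at hℓb
    have h2 : (h * ℓ) ^ 2 < b := by nlinarith
    have h3 : h * ℓ < Real.sqrt b := Real.lt_sqrt_of_sq_lt h2
    rw [le_div_iff₀ hh0]
    nlinarith
  -- each term bounded
  have Tbd : ∀ ℓ ∈ S, harmDim n ℓ ℓ ≤
      3 * (n : ℝ) ^ 2 * (2 * n) ^ (2 * n) * (Real.sqrt b / h) ^ (2 * n - 1) := by
    intro ℓ hℓ
    have hℓ1 : 1 ≤ ℓ := by
      simp only [hS, Finset.mem_filter] at hℓ; exact hℓ.2.1
    refine (harmDim_le n ℓ hn hℓ1).trans ?_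
    gcongr <;> first
      | positivity
      | exact Nat.cast_nonneg _
      | exact key ℓ hℓ
  have hsum := Finset.sum_le_card_nsmul S _ _ Tbd
  have hcard : (S.card : ℝ) ≤ Real.sqrt b / h := by
    have hsub : S ⊆ Finset.Icc 1 ⌊Real.sqrt b / h⌋₊ := by
      intro ℓ hℓ
      have hℓ1 : 1 ≤ ℓ := by simp only [hS, Finset.mem_filter] at hℓ; exact hℓ.2.1
      exact Finset.mem_Icc.mpr ⟨hℓ1, Nat.le_floor (key ℓ hℓ)⟩
    calc (S.card : ℝ) ≤ ((Finset.Icc 1 ⌊Real.sqrt b / h⌋₊).card : ℝ) := by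
          exact_mod_cast Finset.card_le_card hsub
    _ = (⌊Real.sqrt b / h⌋₊ : ℝ) := by simp [Nat.card_Icc]
    _ ≤ Real.sqrt b / h := Nat.floor_le (by positivity)
  refine hsum.trans ?_
  rw [nsmul_eq_mul]
  have hT0 : (0:ℝ) ≤ 3 * (n : ℝ) ^ 2 * (2 * n) ^ (2 * n) * (Real.sqrt b / h) ^ (2 * n - 1) := by
    positivity
  calc (S.card : ℝ) * (3 * (n : ℝ) ^ 2 * (2 * n) ^ (2 * n) * (Real.sqrt b / h) ^ (2 * n - 1))
      ≤ (Real.sqrt b / h) * (3 * (n : ℝ) ^ 2 * (2 * n) ^ (2 * n) * (Real.sqrt b / h) ^ (2 * n - 1)) := by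
        gcongr
  _ = 3 * (n : ℝ) ^ 2 * (2 * n) ^ (2 * n) * (Real.sqrt b / h) ^ (2 * n) := by
        rw [show (Real.sqrt b / h) ^ (2 * n) = (Real.sqrt b / h) ^ (2 * n - 1) * (Real.sqrt b / h) by
          rw [← pow_succ]; congr 1; omega]
        ring
  _ = 3 * (n : ℝ) ^ 2 * (2 * n) ^ (2 * n) * (Real.sqrt b) ^ (2 * n) / h ^ (2 * n) := by
        rw [div_pow]; ring
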